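/- arXiv:1606.01848 — 2 statements merged into one kernel-verified Lean document; each statement's English description precedes it below -/
import Mathlib

section
/- For finite nonempty simple graphs G₁ and G₂, the smallest dimension admitting a faithful orthogonal representation of their join satisfies Ξ(G₁ + G₂) = Ξ(G₁) + Ξ(G₂). -/
open Module

/-- An orthogonal representation (OR) of a simple graph `G` in `ℂ^d`: an injective map from the
vertices of `G` to one-dimensional subspaces of `ℂ^d` such that adjacent vertices are mapped to
orthogonal subspaces. -/
def IsOrthRep {V : Type*} (G : SimpleGraph V) (d : ℕ)
    (φ : V → Submodule ℂ (EuclideanSpace ℂ (Fin d))) : Prop :=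
  Function.Injective φ ∧ (∀ v, Module.finrank ℂ (φ v) = 1) ∧
    ∀ u v : V, G.Adj u v → φ u ≤ (φ v)ᗮ

/-- A faithful orthogonal representation (FOR) of a simple graph `G` in `ℂ^d`: an injective map
from the vertices of `G` to one-dimensional subspaces of `ℂ^d` such that two distinct vertices
are adjacent if and only if their images are orthogonal subspaces. -/
def IsFaithfulOrthRep {V : Type*} (G : SimpleGraph V) (d : ℕ)
    (φ : V → Submodule ℂ (EuclideanSpace ℂ (Fin d))) : Prop :=
  Function.Injective φ ∧ (∀ v, Module.finrank ℂ (φ v) = 1) ∧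
    ∀ u v : V, u ≠ v → (G.Adj u v ↔ φ u ≤ (φ v)ᗮ)

/-- `G` admits an orthogonal representation in `ℂ^d`. -/
def HasOR {V : Type*} (G : SimpleGraph V) (d : ℕ) : Prop := ∃ φ, IsOrthRep G d φ

/-- `G` admits a faithful orthogonal representation in `ℂ^d`. -/
def HasFOR {V : Type*} (G : SimpleGraph V) (d : ℕ) : Prop := ∃ φ, IsFaithfulOrthRep G d φ

/-- `ξ(G)`: the smallest dimension `d` such that `G` admits an orthogonal representation
in `ℂ^d`. -/
noncomputable def xi {V : Type*} (G : SimpleGraph V) : ℕ := sInf {d | HasOR G d}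

/-- `Ξ(G)`: the smallest dimension `d` such that `G` admits a faithful orthogonal representation
in `ℂ^d`. -/
noncomputable def Xi {V : Type*} (G : SimpleGraph V) : ℕ := sInf {d | HasFOR G d}

/-- A `b`-fold coloring of `G` with `a` colors: each vertex receives a set of `b` colors out of
`a` colors such that adjacent vertices receive disjoint sets. -/
def HasFoldColoring {V : Type*} (G : SimpleGraph V) (a b : ℕ) : Prop :=
  ∃ c : V → Finset (Fin a), (∀ v, (c v).card = b) ∧
    ∀ u v : V, G.Adj u v → Disjoint (c u) (c v)

/-- The fractional chromatic number `χ_f(G)`: the infimum of `a / b` over all `b`-fold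
colorings of `G` with `a` colors. -/
noncomputable def fracChrom {V : Type*} (G : SimpleGraph V) : ℝ :=
  sInf {x : ℝ | ∃ a b : ℕ, 0 < b ∧ HasFoldColoring G a b ∧ x = (a : ℝ) / b}

/-- The join `G₁ + G₂` of two graphs: their disjoint union together with one additional edge
between every pair of vertices taken one from each graph. -/
def graphJoin {V₁ V₂ : Type*} (G₁ : SimpleGraph V₁) (G₂ : SimpleGraph V₂) :
    SimpleGraph (V₁ ⊕ V₂) :=
  (G₁ ⊕g G₂) ⊔ completeBipartiteGraph V₁ V₂

/-!
A faithful orthogonal representation is the same as a choice of spanning vectors, pairwise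
non-parallel, that are orthogonal exactly along the edges. For a join, the vectors of the two
sides are mutually orthogonal, so their spans are orthogonal subspaces of dimensions at least
`Ξ(G₁)` and `Ξ(G₂)`; this gives `Ξ(G₁) + Ξ(G₂) ≤ Ξ(G₁ + G₂)`. Conversely, placing optimal
representations of `G₁` and `G₂` in the two factors of `ℂ^Ξ(G₁) ⊕ ℂ^Ξ(G₂)` represents the join.
-/

open scoped InnerProductSpace

open Function Submodule

structure IsFaithfulOrthVecRep {V E : Type*} (𝕜 : Type*) [RCLike 𝕜] [NormedAddCommGroup E]
    [InnerProductSpace 𝕜 E] (G : SimpleGraph V) (f : V → E) : Prop where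
  ne_zero : ∀ v, f v ≠ 0
  smul_ne : ∀ u v, u ≠ v → ∀ c : 𝕜, c • f u ≠ f v
  adj_iff : ∀ u v, u ≠ v → (G.Adj u v ↔ ⟪f u, f v⟫_𝕜 = 0)

theorem Submodule.exists_ne_zero_eq_span_singleton {K M : Type*} [DivisionRing K]
    [AddCommGroup M] [Module K M] {p : Submodule K M} (hp : finrank K p = 1) :
    ∃ x ≠ 0, p = K ∙ x := by
  obtain ⟨x, hx, hp⟩ := finrank_eq_one_iff'.1 hp
  refine ⟨x, by simpa using hx,
    le_antisymm (fun y hy => ?_) ((span_singleton_le_iff_mem _ _).2 x.2)⟩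
  obtain ⟨c, hc⟩ := hp ⟨y, hy⟩
  exact mem_span_singleton.2 ⟨c, congrArg Subtype.val hc⟩

theorem smul_ne_of_inner_eq_zero {𝕜 E : Type*} [RCLike 𝕜] [NormedAddCommGroup E]
    [InnerProductSpace 𝕜 E] {x y : E} (hxy : ⟪x, y⟫_𝕜 = 0) (hy : y ≠ 0) (c : 𝕜) : c • x ≠ y := by
  intro hc
  have : ⟪c • x, y⟫_𝕜 = 0 := by rw [inner_smul_left, hxy, mul_zero]
  rw [hc, inner_self_eq_zero] at this
  exact hy this

section Representations

variable {V 𝕜 E F : Type*} [RCLike 𝕜] [NormedAddCommGroup E] [InnerProductSpace 𝕜 E]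
  [NormedAddCommGroup F] [InnerProductSpace 𝕜 F] {G : SimpleGraph V}

theorem isFaithfulOrthVecRep_comp_linearIsometry_iff {f : V → E} (L : E →ₗᵢ[𝕜] F) :
    IsFaithfulOrthVecRep 𝕜 G (L ∘ f) ↔ IsFaithfulOrthVecRep 𝕜 G f := by
  refine ⟨fun h => ⟨fun v hv => h.ne_zero v (by simp [hv]), fun u v huv c hc =>
      h.smul_ne u v huv c (by simp [← hc]), fun u v huv => by simpa using h.adj_iff u v huv⟩,
    fun h => ⟨fun v hv => h.ne_zero v ?_, fun u v huv c hc => h.smul_ne u v huv c ?_,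
      fun u v huv => by simpa using h.adj_iff u v huv⟩⟩
  · exact L.injective (by simpa using hv)
  · exact L.injective (by simpa using hc)

theorem hasFOR_iff_exists_isFaithfulOrthVecRep {d : ℕ} :
    HasFOR G d ↔ ∃ f : V → EuclideanSpace ℂ (Fin d), IsFaithfulOrthVecRep ℂ G f := by
  constructor
  · rintro ⟨φ, hinj, hrank, hadj⟩
    choose f hf0 hφ using fun v => exists_ne_zero_eq_span_singleton (hrank v)
    refine ⟨f, ⟨hf0, fun u v huv c hc => huv (hinj ?_), fun u v huv => ?_⟩⟩
    · rw [hφ, hφ, span_singleton_eq_span_singleton]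
      have hc0 : c ≠ 0 := by rintro rfl; exact hf0 v (by simp [← hc])
      exact ⟨Units.mk0 c hc0, hc⟩
    · rw [hadj u v huv, hφ, hφ, ← IsOrtho, isOrtho_span]
      simp
  · rintro ⟨f, hf⟩
    refine ⟨fun v => ℂ ∙ f v, fun u v huv => ?_, fun v => finrank_span_singleton (hf.ne_zero v),
      fun u v huv => ?_⟩
    · by_contra hne
      obtain ⟨c, hc⟩ := span_singleton_eq_span_singleton.1 huv
      exact hf.smul_ne u v hne c hc
    · rw [hf.adj_iff u v huv, ← IsOrtho, isOrtho_span]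
      simp

namespace IsFaithfulOrthVecRep

theorem comap {f : V → E} (hf : IsFaithfulOrthVecRep 𝕜 G f) {W : Type*} {g : W → V}
    (hg : Injective g) : IsFaithfulOrthVecRep 𝕜 (G.comap g) (f ∘ g) :=
  ⟨fun v => hf.ne_zero (g v), fun u v huv => hf.smul_ne (g u) (g v) (hg.ne huv),
    fun u v huv => hf.adj_iff (g u) (g v) (hg.ne huv)⟩

variable {E : Type*} [NormedAddCommGroup E] [InnerProductSpace ℂ E] [FiniteDimensional ℂ E]
  {f : V → E}

theorem hasFOR_finrank (hf : IsFaithfulOrthVecRep ℂ G f) : HasFOR G (finrank ℂ E) :=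
  hasFOR_iff_exists_isFaithfulOrthVecRep.2 ⟨_,
    (isFaithfulOrthVecRep_comp_linearIsometry_iff
      (stdOrthonormalBasis ℂ E).repr.toLinearIsometry).2 hf⟩

theorem hasFOR_finrank_span (hf : IsFaithfulOrthVecRep ℂ G f) :
    HasFOR G (finrank ℂ (span ℂ (Set.range f))) := by
  let f' : V → span ℂ (Set.range f) := fun v => ⟨f v, subset_span ⟨v, rfl⟩⟩
  exact ((isFaithfulOrthVecRep_comp_linearIsometry_iff (f := f')
    (span ℂ (Set.range f)).subtypeₗᵢ).1 hf).hasFOR_finrank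

end IsFaithfulOrthVecRep

end Representations

section Product

variable (𝕜 E₁ E₂ : Type*) [RCLike 𝕜] [NormedAddCommGroup E₁] [InnerProductSpace 𝕜 E₁]
  [NormedAddCommGroup E₂] [InnerProductSpace 𝕜 E₂]

noncomputable def WithLp.inlₗᵢ : E₁ →ₗᵢ[𝕜] WithLp 2 (E₁ × E₂) :=
  ((WithLp.linearEquiv 2 𝕜 (E₁ × E₂)).symm.toLinearMap ∘ₗ LinearMap.inl 𝕜 E₁ E₂).isometryOfInner
    fun x y => by simp [WithLp.prod_inner_apply]

noncomputable def WithLp.inrₗᵢ : E₂ →ₗᵢ[𝕜] WithLp 2 (E₁ × E₂) :=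
  ((WithLp.linearEquiv 2 𝕜 (E₁ × E₂)).symm.toLinearMap ∘ₗ LinearMap.inr 𝕜 E₁ E₂).isometryOfInner
    fun x y => by simp [WithLp.prod_inner_apply]

theorem WithLp.inner_inlₗᵢ_inrₗᵢ (x : E₁) (y : E₂) :
    ⟪WithLp.inlₗᵢ 𝕜 E₁ E₂ x, WithLp.inrₗᵢ 𝕜 E₁ E₂ y⟫_𝕜 = 0 := by
  simp [WithLp.inlₗᵢ, WithLp.inrₗᵢ, WithLp.prod_inner_apply]

theorem WithLp.finrank_prod [FiniteDimensional 𝕜 E₁] [FiniteDimensional 𝕜 E₂] :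
    finrank 𝕜 (WithLp 2 (E₁ × E₂)) = finrank 𝕜 E₁ + finrank 𝕜 E₂ := by
  rw [(WithLp.linearEquiv 2 𝕜 (E₁ × E₂)).finrank_eq, Module.finrank_prod]

end Product

section NonEdge

variable {V : Type*} [DecidableEq V] (G : SimpleGraph V) [DecidableRel G.Adj]

/-- The indicator of the loops and non-edges at `v`: two distinct vertices share at most the
coordinate `s(u, v)`, and they share it exactly when they are not adjacent. -/
noncomputable def nonEdgeIncidenceVec (v : V) : EuclideanSpace ℂ (Sym2 V) :=
  WithLp.toLp 2 fun z => if v ∈ z ∧ z ∉ G.edgeSet then 1 else 0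

theorem nonEdgeIncidenceVec_apply_diag (u v : V) :
    nonEdgeIncidenceVec G u s(v, v) = if u = v then 1 else 0 := by
  simp [nonEdgeIncidenceVec]

theorem inner_nonEdgeIncidenceVec [Fintype V] {u v : V} (huv : u ≠ v) :
    ⟪nonEdgeIncidenceVec G u, nonEdgeIncidenceVec G v⟫_ℂ = if G.Adj u v then 0 else 1 := by
  have hterm : ∀ z : Sym2 V,
      (if v ∈ z ∧ z ∉ G.edgeSet then 1 else 0) *
          (starRingEnd ℂ) (if u ∈ z ∧ z ∉ G.edgeSet then 1 else 0) =
        if z = s(u, v) then (if G.Adj u v then 0 else 1) else 0 := by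
    intro z
    by_cases hz : z = s(u, v)
    · subst hz
      by_cases h : G.Adj u v <;> simp [h]
    · have : ¬(u ∈ z ∧ v ∈ z) := fun h => hz ((Sym2.mem_and_mem_iff huv).1 h)
      by_cases hu : u ∈ z <;> simp_all
  simp only [nonEdgeIncidenceVec, PiLp.inner_apply, RCLike.inner_apply, hterm,
    Finset.sum_ite_eq', Finset.mem_univ, if_true]

theorem isFaithfulOrthVecRep_nonEdgeIncidenceVec [Fintype V] :
    IsFaithfulOrthVecRep ℂ G (nonEdgeIncidenceVec G) := by
  refine ⟨fun v hv => ?_, fun u v huv c hc => ?_, fun u v huv => ?_⟩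
  · simpa [nonEdgeIncidenceVec_apply_diag] using congr($hv s(v, v))
  · simpa [nonEdgeIncidenceVec_apply_diag, huv] using congr($hc s(v, v))
  · by_cases h : G.Adj u v <;> simp [inner_nonEdgeIncidenceVec G huv, h]

end NonEdge

theorem exists_hasFOR {V : Type*} [Finite V] (G : SimpleGraph V) : ∃ d, HasFOR G d := by
  have := Fintype.ofFinite V
  classical
  exact ⟨_, (isFaithfulOrthVecRep_nonEdgeIncidenceVec G).hasFOR_finrank⟩

theorem hasFOR_Xi {V : Type*} [Finite V] (G : SimpleGraph V) : HasFOR G (Xi G) :=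
  Nat.sInf_mem (exists_hasFOR G)

theorem Xi_le {V : Type*} {G : SimpleGraph V} {d : ℕ} (h : HasFOR G d) : Xi G ≤ d :=
  Nat.sInf_le h

section Join

variable {V₁ V₂ : Type*} {G₁ : SimpleGraph V₁} {G₂ : SimpleGraph V₂}

@[simp]
theorem graphJoin_comap_inl : (graphJoin G₁ G₂).comap Sum.inl = G₁ := by
  ext; simp [graphJoin]

@[simp]
theorem graphJoin_comap_inr : (graphJoin G₁ G₂).comap Sum.inr = G₂ := by
  ext; simp [graphJoin]

theorem graphJoin_adj_inl_inr (u : V₁) (v : V₂) : (graphJoin G₁ G₂).Adj (.inl u) (.inr v) := by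
  simp [graphJoin]

theorem IsFaithfulOrthVecRep.sumElim {𝕜 E : Type*} [RCLike 𝕜] [NormedAddCommGroup E]
    [InnerProductSpace 𝕜 E] {f₁ : V₁ → E} {f₂ : V₂ → E}
    (h₁ : IsFaithfulOrthVecRep 𝕜 G₁ f₁) (h₂ : IsFaithfulOrthVecRep 𝕜 G₂ f₂)
    (h : ∀ u v, ⟪f₁ u, f₂ v⟫_𝕜 = 0) :
    IsFaithfulOrthVecRep 𝕜 (graphJoin G₁ G₂) (Sum.elim f₁ f₂) := by
  refine ⟨Sum.forall.2 ⟨h₁.ne_zero, h₂.ne_zero⟩, ?_, ?_⟩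
  · rintro (u | u) (v | v) huv c
    · exact h₁.smul_ne u v (by simpa using huv) c
    · exact smul_ne_of_inner_eq_zero (h u v) (h₂.ne_zero v) c
    · exact smul_ne_of_inner_eq_zero (inner_eq_zero_symm.1 (h v u)) (h₁.ne_zero v) c
    · exact h₂.smul_ne u v (by simpa using huv) c
  · rintro (u | u) (v | v) huv
    · simpa [graphJoin] using h₁.adj_iff u v (by simpa using huv)
    · simpa [graphJoin] using h u v
    · simpa [graphJoin, inner_eq_zero_symm] using h v u
    · simpa [graphJoin] using h₂.adj_iff u v (by simpa using huv)

theorem HasFOR.join {d₁ d₂ : ℕ} (h₁ : HasFOR G₁ d₁) (h₂ : HasFOR G₂ d₂) :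
    HasFOR (graphJoin G₁ G₂) (d₁ + d₂) := by
  obtain ⟨f₁, hf₁⟩ := hasFOR_iff_exists_isFaithfulOrthVecRep.1 h₁
  obtain ⟨f₂, hf₂⟩ := hasFOR_iff_exists_isFaithfulOrthVecRep.1 h₂
  let E₁ := EuclideanSpace ℂ (Fin d₁)
  let E₂ := EuclideanSpace ℂ (Fin d₂)
  have hf := ((isFaithfulOrthVecRep_comp_linearIsometry_iff (WithLp.inlₗᵢ ℂ E₁ E₂)).2 hf₁).sumElim
    ((isFaithfulOrthVecRep_comp_linearIsometry_iff (WithLp.inrₗᵢ ℂ E₁ E₂)).2 hf₂)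
    fun u v => WithLp.inner_inlₗᵢ_inrₗᵢ ℂ E₁ E₂ (f₁ u) (f₂ v)
  simpa [E₁, E₂, WithLp.finrank_prod] using hf.hasFOR_finrank

theorem HasFOR.exists_add_le_of_graphJoin {d : ℕ} (h : HasFOR (graphJoin G₁ G₂) d) :
    ∃ d₁ d₂, d₁ + d₂ ≤ d ∧ HasFOR G₁ d₁ ∧ HasFOR G₂ d₂ := by
  obtain ⟨f, hf⟩ := hasFOR_iff_exists_isFaithfulOrthVecRep.1 h
  have h₁ := hf.comap Sum.inl_injective
  have h₂ := hf.comap Sum.inr_injective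
  rw [graphJoin_comap_inl] at h₁
  rw [graphJoin_comap_inr] at h₂
  refine ⟨_, _, ?_, h₁.hasFOR_finrank_span, h₂.hasFOR_finrank_span⟩
  have hortho : span ℂ (Set.range (f ∘ Sum.inl)) ⟂ span ℂ (Set.range (f ∘ Sum.inr)) := by
    rw [isOrtho_span]
    rintro _ ⟨u, rfl⟩ _ ⟨v, rfl⟩
    exact (hf.adj_iff _ _ Sum.inl_ne_inr).1 (graphJoin_adj_inl_inr u v)
  simpa using finrank_add_finrank_le_of_disjoint hortho.disjoint

end Join

theorem stmt8_general {V₁ V₂ : Type*} [Fintype V₁] [Fintype V₂]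
    (G₁ : SimpleGraph V₁) (G₂ : SimpleGraph V₂) :
    Xi (graphJoin G₁ G₂) = Xi G₁ + Xi G₂ := by
  refine le_antisymm (Xi_le ((hasFOR_Xi G₁).join (hasFOR_Xi G₂))) ?_
  obtain ⟨d₁, d₂, hd, h₁, h₂⟩ := (hasFOR_Xi (graphJoin G₁ G₂)).exists_add_le_of_graphJoin
  exact (add_le_add (Xi_le h₁) (Xi_le h₂)).trans hd

/-- For finite nonempty simple graphs `G₁` and `G₂`,
`Ξ(G₁ + G₂) = Ξ(G₁) + Ξ(G₂)`. -/
theorem stmt8 {V₁ V₂ : Type*} [Fintype V₁] [Fintype V₂] [Nonempty V₁] [Nonempty V₂]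
    (G₁ : SimpleGraph V₁) (G₂ : SimpleGraph V₂) :
    Xi (graphJoin G₁ G₂) = Xi G₁ + Xi G₂ :=
  stmt8_general G₁ G₂
end

section
/- For finite nonempty simple graphs G₁ and G₂ with at least one of them having more than one vertex, the smallest dimension admitting an orthogonal representation of their disjoint union satisfies ξ(G₁ ∪ G₂) = max(ξ(G₁), ξ(G₂)). -/
open Module

/-!
The lower bound holds because each `Gᵢ` embeds in `G₁ ∪ G₂`. For the upper bound, pad
orthogonal representations of `G₁` and `G₂` into `ℂ^d` with `d = max (ξ G₁) (ξ G₂)`, which is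
at least `2`, and move the lines of `G₂` by a unitary `U` so that none of them coincides with
a line of `G₁`; unitaries preserve orthogonality and distinctness, and no edge joins the two
parts.

`U` is `D_z ∘ R ∘ D_w` with `D_z = diag (1, z, z², …)` for `|z| = 1` and `R` a reflection
none of whose matrix entries vanishes. If `a` has two nonzero coordinates `aᵢ, aⱼ`, then
`D_z a ∥ f` forces `zⁱ aᵢ fⱼ = zʲ aⱼ fᵢ`, a nonzero polynomial equation, so only finitely many
`z` are bad. Vectors with a single nonzero coordinate are dealt with by first applying `R ∘ D_w`:
`R (D_w a)` is a multiple of `e_k` only if `D_w a ∥ R e_k`, and `R e_k` has two nonzero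
coordinates, so again only finitely many `w` are bad. The circle being infinite, good `w` and
`z` exist.
-/

open Submodule Polynomial

lemma Submodule.exists_eq_span_singleton_of_finrank_eq_one {K V : Type*} [DivisionRing K]
    [AddCommGroup V] [Module K V] {S : Submodule K V} (hS : finrank K S = 1) :
    ∃ x ≠ 0, S = K ∙ x := by
  obtain ⟨w, hw0, -⟩ := finrank_eq_one_iff'.mp hS
  have hw0' : (w : V) ≠ 0 := by simpa using hw0
  exact ⟨w, hw0', eq_span_singleton_of_mem_of_finrank_eq_one hS w.2 hw0'⟩

lemma exists_linearIsometry_of_finrank_le {𝕜 E F : Type*} [RCLike 𝕜] [NormedAddCommGroup E]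
    [InnerProductSpace 𝕜 E] [FiniteDimensional 𝕜 E] [NormedAddCommGroup F]
    [InnerProductSpace 𝕜 F] [FiniteDimensional 𝕜 F] (h : finrank 𝕜 E ≤ finrank 𝕜 F) :
    Nonempty (E →ₗᵢ[𝕜] F) := by
  let b := stdOrthonormalBasis 𝕜 E
  let c := stdOrthonormalBasis 𝕜 F
  refine ⟨(b.toBasis.constr 𝕜 (c ∘ Fin.castLE h)).isometryOfOrthonormal
    (v := b.toBasis) b.orthonormal ?_⟩
  convert c.orthonormal.comp _ (Fin.castLE_injective h) using 1
  ext i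
  simp

instance : Infinite Circle :=
  Circle.argEquiv.infinite_iff.mpr (Set.Ioc_infinite (by linarith [Real.pi_pos])).to_subtype

noncomputable def Circle.mulLinearIsometryEquiv (z : Circle) : ℂ ≃ₗᵢ[ℂ] ℂ :=
  { LinearEquiv.smulOfUnit (Circle.toUnits z) with
    norm_map' := fun x => by simp [LinearEquiv.smulOfUnit, Units.smul_def, Circle.norm_coe] }

@[simp]
lemma Circle.mulLinearIsometryEquiv_apply (z : Circle) (x : ℂ) :
    z.mulLinearIsometryEquiv x = z * x := by
  simp [Circle.mulLinearIsometryEquiv, LinearEquiv.smulOfUnit, Units.smul_def]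

section Diagonal

variable {d : ℕ}

noncomputable def diagPow (z : Circle) :
    EuclideanSpace ℂ (Fin d) ≃ₗᵢ[ℂ] EuclideanSpace ℂ (Fin d) :=
  LinearIsometryEquiv.piLpCongrRight 2 fun i => (z ^ (i : ℕ)).mulLinearIsometryEquiv

@[simp]
lemma diagPow_apply (z : Circle) (a : EuclideanSpace ℂ (Fin d)) (i : Fin d) :
    diagPow z a i = (z : ℂ) ^ (i : ℕ) * a i := by
  simp [diagPow]

def HasTwoNonzeroCoords (a : EuclideanSpace ℂ (Fin d)) : Prop :=
  ∃ i j, i ≠ j ∧ a i ≠ 0 ∧ a j ≠ 0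

lemma finite_setOf_diagPow_mem_span_of_mul_ne_zero {a f : EuclideanSpace ℂ (Fin d)} {i j : Fin d}
    (hij : i ≠ j) (h : a j * f i ≠ 0) : {z : Circle | diagPow z a ∈ ℂ ∙ f}.Finite := by
  set p : ℂ[X] := C (a i * f j) * X ^ (i : ℕ) - C (a j * f i) * X ^ (j : ℕ)
  have hp : p ≠ 0 := fun hp => h <| by
    have := congrArg (coeff · j) hp
    simp only [p, coeff_sub, coeff_C_mul_X_pow, if_neg (Fin.val_ne_iff.mpr hij).symm] at this
    simpa using this
  refine ((finite_setOfPred_isRoot hp).preimage Circle.coe_injective.injOn).subset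
    fun (z : Circle) hz => ?_
  obtain ⟨c, hc⟩ := mem_span_singleton.mp hz
  have hci : c * f i = (z : ℂ) ^ (i : ℕ) * a i := by simpa using congrArg (· i) hc
  have hcj : c * f j = (z : ℂ) ^ (j : ℕ) * a j := by simpa using congrArg (· j) hc
  show IsRoot p (z : ℂ)
  simp only [IsRoot.def, p, eval_sub, eval_mul, eval_C, eval_pow, eval_X]
  linear_combination f i * hcj - f j * hci

lemma finite_setOf_diagPow_mem_span {a f : EuclideanSpace ℂ (Fin d)} (ha : a ≠ 0)
    (h : HasTwoNonzeroCoords a ∨ HasTwoNonzeroCoords f) :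
    {z : Circle | diagPow z a ∈ ℂ ∙ f}.Finite := by
  rcases Set.eq_empty_or_nonempty {z : Circle | diagPow z a ∈ ℂ ∙ f} with hS | ⟨z, hz⟩
  · simp [hS]
  obtain ⟨c, hc⟩ := mem_span_singleton.mp hz
  have hc0 : c ≠ 0 := by
    rintro rfl
    exact ha ((diagPow z).map_eq_zero_iff.mp (by simpa using hc.symm))
  -- `diagPow z` is an invertible diagonal map, so `a` and `f` have the same support
  have hsupp : ∀ l, a l ≠ 0 ↔ f l ≠ 0 := fun l => by
    have hl : c * f l = (z : ℂ) ^ (l : ℕ) * a l := by simpa using congrArg (· l) hc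
    constructor <;> intro h0 h1 <;> simp_all
  obtain ⟨i, j, hij, hai, haj⟩ : HasTwoNonzeroCoords a := by
    simpa only [HasTwoNonzeroCoords, hsupp, or_self] using h
  exact finite_setOf_diagPow_mem_span_of_mul_ne_zero hij (mul_ne_zero haj ((hsupp i).mp hai))

noncomputable def powTwoVec (d : ℕ) : EuclideanSpace ℂ (Fin d) := WithLp.toLp 2 fun i => 2 ^ (i : ℕ)

@[simp]
lemma powTwoVec_apply (i : Fin d) : powTwoVec d i = 2 ^ (i : ℕ) := rfl

lemma odd_sum_four_pow (d : ℕ) : Odd (∑ i : Fin (d + 1), 4 ^ (i : ℕ)) := by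
  rw [Fin.sum_univ_succ]
  exact ⟨2 * ∑ i : Fin d, 4 ^ (i : ℕ), by
    simp only [Fin.val_succ, Fin.val_zero, pow_zero, pow_succ, ← Finset.sum_mul]; ring⟩

lemma norm_powTwoVec_sq : ‖powTwoVec d‖ ^ 2 = ((∑ i : Fin d, 4 ^ (i : ℕ) : ℕ) : ℝ) := by
  rw [EuclideanSpace.norm_sq_eq]
  push_cast
  refine Finset.sum_congr rfl fun i _ => ?_
  rw [powTwoVec_apply, norm_pow, Complex.norm_ofNat, ← pow_mul, mul_comm, pow_mul]
  norm_num

lemma reflection_powTwoVec_single_apply_ne_zero (hd : 0 < d) (k i : Fin d) :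
    reflection (ℂ ∙ powTwoVec d) (EuclideanSpace.single k 1) i ≠ 0 := by
  obtain ⟨d, rfl⟩ := Nat.exists_eq_succ_of_ne_zero hd.ne'
  obtain ⟨m, hm⟩ := odd_sum_four_pow d
  have hN0 : ((∑ i : Fin (d + 1), 4 ^ (i : ℕ) : ℕ) : ℂ) ≠ 0 := by exact_mod_cast (by omega)
  rw [reflection_singleton_apply, EuclideanSpace.inner_single_right, ← RCLike.ofReal_pow,
    norm_powTwoVec_sq, RCLike.ofReal_natCast]
  simp only [PiLp.sub_apply, PiLp.smul_apply, powTwoVec_apply, PiLp.single_apply, one_mul,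
    map_pow, map_ofNat, smul_eq_mul, nsmul_eq_mul, Nat.cast_ofNat]
  split_ifs with hik
  · -- the diagonal entry is `2 ⋅ 4ᵏ / ∑ 4ⁱ - 1`, nonzero because `∑ 4ⁱ` is odd
    subst hik
    rw [sub_ne_zero, ne_eq, div_mul_eq_mul_div, mul_div_assoc', div_eq_one_iff_eq hN0]
    intro h
    have h' : 2 * (2 ^ (i : ℕ) * 2 ^ (i : ℕ)) = ∑ i : Fin (d + 1), 4 ^ (i : ℕ) := by
      exact_mod_cast h
    omega
  · simpa using hN0

lemma hasTwoNonzeroCoords_reflection_powTwoVec_single (hd : 2 ≤ d) (k : Fin d) :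
    HasTwoNonzeroCoords (reflection (ℂ ∙ powTwoVec d) (EuclideanSpace.single k 1)) :=
  ⟨⟨0, by omega⟩, ⟨1, by omega⟩, by simp [Fin.ext_iff],
    reflection_powTwoVec_single_apply_ne_zero (by omega) k _,
    reflection_powTwoVec_single_apply_ne_zero (by omega) k _⟩

lemma exists_mem_span_single_of_not_hasTwoNonzeroCoords {y : EuclideanSpace ℂ (Fin d)}
    (hy : y ≠ 0) (h : ¬HasTwoNonzeroCoords y) : ∃ k, y ∈ ℂ ∙ EuclideanSpace.single k (1 : ℂ) := by
  obtain ⟨k, hk⟩ : ∃ k, y k ≠ 0 := by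
    by_contra! h0
    exact hy (PiLp.ext h0)
  refine ⟨k, mem_span_singleton.mpr ⟨y k, PiLp.ext fun l => ?_⟩⟩
  by_cases hl : l = k
  · simp [hl]
  · simpa [hl, eq_comm] using fun hyl => h ⟨l, k, hl, hyl, hk⟩

lemma finite_setOf_not_hasTwoNonzeroCoords (hd : 2 ≤ d) {x : EuclideanSpace ℂ (Fin d)}
    (hx : x ≠ 0) :
    {w : Circle | ¬HasTwoNonzeroCoords (reflection (ℂ ∙ powTwoVec d) (diagPow w x))}.Finite := by
  refine (Set.finite_iUnion fun k => finite_setOf_diagPow_mem_span hx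
    (Or.inr (hasTwoNonzeroCoords_reflection_powTwoVec_single hd k))).subset fun w hw => ?_
  obtain ⟨k, hk⟩ := exists_mem_span_single_of_not_hasTwoNonzeroCoords
    ((Submodule.reflection _).map_ne_zero_iff.mpr ((diagPow w).map_ne_zero_iff.mpr hx)) hw
  obtain ⟨c, hc⟩ := mem_span_singleton.mp hk
  refine Set.mem_iUnion.mpr ⟨k, mem_span_singleton.mpr ⟨c, ?_⟩⟩
  rw [← map_smul, hc]
  exact reflection_reflection _ _

theorem exists_linearIsometryEquiv_forall_notMem_span (hd : 2 ≤ d) {ι κ : Type*} [Finite ι]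
    [Finite κ] {x : ι → EuclideanSpace ℂ (Fin d)} (hx : ∀ i, x i ≠ 0)
    (m : κ → EuclideanSpace ℂ (Fin d)) :
    ∃ U : EuclideanSpace ℂ (Fin d) ≃ₗᵢ[ℂ] EuclideanSpace ℂ (Fin d), ∀ i j, U (x i) ∉ ℂ ∙ m j := by
  obtain ⟨w, hw⟩ := (Set.finite_iUnion fun i =>
    finite_setOf_not_hasTwoNonzeroCoords hd (hx i)).exists_notMem
  set T := (diagPow w).trans (reflection (ℂ ∙ powTwoVec d))
  have hT : ∀ i, HasTwoNonzeroCoords (T (x i)) := by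
    simpa [T] using hw
  obtain ⟨z, hz⟩ := (Set.finite_iUnion fun i => Set.finite_iUnion fun j =>
    finite_setOf_diagPow_mem_span (f := m j) (T.map_ne_zero_iff.mpr (hx i))
      (Or.inl (hT i))).exists_notMem
  exact ⟨T.trans (diagPow z), fun i j h => hz (Set.mem_iUnion₂.mpr ⟨i, j, h⟩)⟩

end Diagonal

section OrthRep

variable {V : Type*} {G : SimpleGraph V} {d e : ℕ}
  {φ : V → Submodule ℂ (EuclideanSpace ℂ (Fin d))}

lemma IsOrthRep.map (h : IsOrthRep G d φ)
    (L : EuclideanSpace ℂ (Fin d) →ₗᵢ[ℂ] EuclideanSpace ℂ (Fin e)) :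
    IsOrthRep G e fun v => (φ v).map L.toLinearMap :=
  ⟨(map_injective_of_injective L.injective).comp h.1,
    fun v => (equivMapOfInjective L.toLinearMap L.injective (φ v)).finrank_eq.symm.trans (h.2.1 v),
    fun u v huv => isOrtho_iff_le.mp ((isOrtho_iff_le.mpr (h.2.2 u v huv)).map L)⟩

lemma IsOrthRep.comp_embedding {W : Type*} {H : SimpleGraph W} (h : IsOrthRep G d φ)
    (f : H ↪g G) : IsOrthRep H d (φ ∘ f) :=
  ⟨h.1.comp f.injective, fun v => h.2.1 (f v), fun _ _ huv => h.2.2 _ _ (f.map_adj_iff.mpr huv)⟩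

lemma IsOrthRep.sumElim {W : Type*} {H : SimpleGraph W}
    {ψ : W → Submodule ℂ (EuclideanSpace ℂ (Fin d))} (hφ : IsOrthRep G d φ)
    (hψ : IsOrthRep H d ψ) (hne : ∀ v w, φ v ≠ ψ w) : IsOrthRep (G ⊕g H) d (Sum.elim φ ψ) := by
  refine ⟨hφ.1.sumElim hψ.1 hne, Sum.rec hφ.2.1 hψ.2.1, ?_⟩
  rintro (u | u) (v | v) huv
  · exact hφ.2.2 u v huv
  · simp at huv
  · simp at huv
  · exact hψ.2.2 u v huv

lemma isOrthRep_span_orthonormal {b : V → EuclideanSpace ℂ (Fin d)} (hb : Orthonormal ℂ b) :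
    IsOrthRep G d fun v => ℂ ∙ b v := by
  have horth : ∀ u v, u ≠ v → (ℂ ∙ b u) ≤ (ℂ ∙ b v)ᗮ := fun u v huv => by
    rw [span_singleton_le_iff_mem, mem_orthogonal_singleton_iff_inner_left]
    exact hb.2 huv
  refine ⟨fun u v huv => by_contra fun hne => hb.ne_zero u ?_,
    fun v => finrank_span_singleton (hb.ne_zero v), fun u v huv => horth u v huv.ne⟩
  replace huv : (ℂ ∙ b u) = ℂ ∙ b v := huv
  have hmem : b u ∈ (ℂ ∙ b v) ⊓ (ℂ ∙ b v)ᗮ :=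
    ⟨huv ▸ mem_span_singleton_self _, horth u v hne (mem_span_singleton_self _)⟩
  simpa [inf_orthogonal_eq_bot] using hmem

lemma HasOR.mono (h : HasOR G d) (hde : d ≤ e) : HasOR G e := by
  obtain ⟨φ, hφ⟩ : ∃ φ, IsOrthRep G d φ := h
  obtain ⟨L⟩ := exists_linearIsometry_of_finrank_le (𝕜 := ℂ)
    (E := EuclideanSpace ℂ (Fin d)) (F := EuclideanSpace ℂ (Fin e)) (by simpa using hde)
  exact ⟨_, hφ.map L⟩

lemma hasOR_natCard [Finite V] (G : SimpleGraph V) : HasOR G (Nat.card V) :=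
  ⟨_, isOrthRep_span_orthonormal
    (EuclideanSpace.orthonormal_single.comp _ (Finite.equivFin V).injective)⟩

lemma two_le_of_hasOR [Nontrivial V] (h : HasOR G d) : 2 ≤ d := by
  obtain ⟨φ, hinj, hrank, -⟩ := h
  by_contra! hd
  have htop : ∀ v, φ v = ⊤ := fun v => eq_top_of_finrank_eq <| by
    have hle := (φ v).finrank_le
    simp only [finrank_euclideanSpace_fin, hrank v] at hle ⊢
    omega
  obtain ⟨u, v, huv⟩ := exists_pair_ne V
  exact huv (hinj ((htop u).trans (htop v).symm))

lemma HasOR.sum [Finite V] {W : Type*} [Finite W] {H : SimpleGraph W} (hd : 2 ≤ d)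
    (hG : HasOR G d) (hH : HasOR H d) : HasOR (G ⊕g H) d := by
  obtain ⟨φ, hφ⟩ : ∃ φ, IsOrthRep G d φ := hG
  obtain ⟨ψ, hψ⟩ : ∃ ψ, IsOrthRep H d ψ := hH
  choose m _ hm using fun v => exists_eq_span_singleton_of_finrank_eq_one (hφ.2.1 v)
  choose x hx0 hx using fun w => exists_eq_span_singleton_of_finrank_eq_one (hψ.2.1 w)
  obtain ⟨U, hU⟩ := exists_linearIsometryEquiv_forall_notMem_span hd hx0 m
  refine ⟨_, hφ.sumElim (hψ.map U.toLinearIsometry) fun v w h => hU w v ?_⟩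
  rw [← hm v, h, hx w]
  exact mem_map_of_mem (mem_span_singleton_self _)

lemma hasOR_xi [Finite V] (G : SimpleGraph V) : HasOR G (xi G) :=
  Nat.sInf_mem (s := {d | HasOR G d}) ⟨_, hasOR_natCard G⟩

lemma xi_le (h : HasOR G d) : xi G ≤ d :=
  Nat.sInf_le h

lemma xi_le_xi_of_embedding [Finite V] {W : Type*} {H : SimpleGraph W} (f : H ↪g G) :
    xi H ≤ xi G := by
  obtain ⟨φ, hφ⟩ : ∃ φ, IsOrthRep G (xi G) φ := hasOR_xi G
  exact xi_le ⟨_, hφ.comp_embedding f⟩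

end OrthRep

theorem stmt9_general {V₁ V₂ : Type*} [Fintype V₁] [Fintype V₂]
    (G₁ : SimpleGraph V₁) (G₂ : SimpleGraph V₂)
    (h : 1 < Fintype.card V₁ ∨ 1 < Fintype.card V₂) :
    xi (G₁ ⊕g G₂) = max (xi G₁) (xi G₂) := by
  have hd : 2 ≤ max (xi G₁) (xi G₂) := by
    rcases h with h | h
    · have := Fintype.one_lt_card_iff_nontrivial.mp h
      exact le_max_of_le_left (two_le_of_hasOR (hasOR_xi G₁))
    · have := Fintype.one_lt_card_iff_nontrivial.mp h
      exact le_max_of_le_right (two_le_of_hasOR (hasOR_xi G₂))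
  apply le_antisymm
  · exact xi_le (HasOR.sum hd ((hasOR_xi G₁).mono (le_max_left _ _))
      ((hasOR_xi G₂).mono (le_max_right _ _)))
  · exact max_le (xi_le_xi_of_embedding SimpleGraph.Embedding.sumInl)
      (xi_le_xi_of_embedding SimpleGraph.Embedding.sumInr)

/-- For finite nonempty simple graphs `G₁` and `G₂`, at least one of which has
more than one vertex, `ξ(G₁ ∪ G₂) = max (ξ(G₁), ξ(G₂))`. -/
theorem stmt9 {V₁ V₂ : Type*} [Fintype V₁] [Fintype V₂] [Nonempty V₁] [Nonempty V₂]
    (G₁ : SimpleGraph V₁) (G₂ : SimpleGraph V₂)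
    (h : 1 < Fintype.card V₁ ∨ 1 < Fintype.card V₂) :
    xi (G₁ ⊕g G₂) = max (xi G₁) (xi G₂) :=
  stmt9_general G₁ G₂ h
end
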